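/- Consider a fully connected network with continuous activations, parameters θ = (W₁, b₁, …, W_{L−1}, b_{L−1}, W_L), post-activation vectors defined by z₀(x) = x and z_k(x) = φ(W_k z_{k−1}(x) + b_k) for k = 1, …, L−1, output f_θ(x) = W_L z_{L−1}(x), and empirical quadratic loss F(θ) = Σ_{i=1}^n ‖y_i − f_θ(x_i)‖². Let Z(X) ∈ ℝ^{d_{L−1}×n} denote the matrix whose columns are z_{L−1}(x₁), …, z_{L−1}(xₙ). If θ* is a local minimum of F at which Z(X) has rank n (in particular d_{L−1} ≥ n), then θ* is a global minimum of F and F(θ*) = 0. -/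

import Mathlib

noncomputable section

/-- Post-activation vectors of a fully connected network: `z_0(x) = x` and
`z_{l+1}(x) = φ(W_l z_l(x) + b_l)` (entrywise activation, indexed by layer). -/
def mlpHidden (d : ℕ → ℕ) (σ : ℕ → ℝ → ℝ)
    (W : (l : ℕ) → Fin (d (l + 1)) → Fin (d l) → ℝ)
    (b : (l : ℕ) → Fin (d (l + 1)) → ℝ) :
    (l : ℕ) → (Fin (d 0) → ℝ) → Fin (d l) → ℝ
  | 0 => fun x => x
  | l + 1 => fun x j => σ (l + 1) (∑ i, W l j i * mlpHidden d σ W b l x i + b l j)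

lemma mlpHidden_congr (d : ℕ → ℕ) (σ : ℕ → ℝ → ℝ)
    (W W' : (l : ℕ) → Fin (d (l + 1)) → Fin (d l) → ℝ)
    (b b' : (l : ℕ) → Fin (d (l + 1)) → ℝ) :
    ∀ (L : ℕ), (∀ l < L, W l = W' l) → (∀ l < L, b l = b' l) →
      ∀ x, mlpHidden d σ W b L x = mlpHidden d σ W' b' L x
  | 0, _, _, _ => rfl
  | L + 1, hW, hb, x => by
      funext j
      simp only [mlpHidden]
      rw [mlpHidden_congr d σ W W' b b' L
        (fun l hl => hW l (hl.trans (Nat.lt_succ_self L)))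
        (fun l hl => hb l (hl.trans (Nat.lt_succ_self L))) x,
        hW L (Nat.lt_succ_self L), hb L (Nat.lt_succ_self L)]

/-- Extend a family of `M` weight matrices (indexed by `Fin M`) to an `ℕ`-indexed family. -/
def extW (M : ℕ) (d : ℕ → ℕ)
    (W : (l : Fin M) → Fin (d ((l : ℕ) + 1)) → Fin (d (l : ℕ)) → ℝ) :
    (l : ℕ) → Fin (d (l + 1)) → Fin (d l) → ℝ :=
  fun l => if h : l < M then W ⟨l, h⟩ else fun _ _ => 0

/-- Extend a family of `M` bias vectors (indexed by `Fin M`) to an `ℕ`-indexed family. -/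
def extb (M : ℕ) (d : ℕ → ℕ)
    (b : (l : Fin M) → Fin (d ((l : ℕ) + 1)) → ℝ) :
    (l : ℕ) → Fin (d (l + 1)) → ℝ :=
  fun l => if h : l < M then b ⟨l, h⟩ else fun _ => 0

/-- Parameters of a fully connected network with `M + 1` layers (`L = M + 1` in the text):
weight matrices `W_1, …, W_{M+1}` and biases `b_1, …, b_M` (no bias in the output layer). -/
abbrev Params (M : ℕ) (d : ℕ → ℕ) :=
  ((l : Fin (M + 1)) → Fin (d ((l : ℕ) + 1)) → Fin (d (l : ℕ)) → ℝ) ×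
    ((l : Fin M) → Fin (d ((l : ℕ) + 1)) → ℝ)

/-- Output of the fully connected network `f_θ(x) = W_{M+1} z_M(x)`. -/
def net (M : ℕ) (d : ℕ → ℕ) (σ : ℕ → ℝ → ℝ) (θ : Params M d)
    (x : Fin (d 0) → ℝ) : Fin (d (M + 1)) → ℝ :=
  fun j => ∑ i, θ.1 ⟨M, Nat.lt_succ_self M⟩ j i *
    mlpHidden d σ (extW (M + 1) d θ.1) (extb M d θ.2) M x i

/-- If `θ*` is a local minimum of the quadratic empirical loss of a fully connected
network with continuous activation `φ` (here `L = M + 1` layers, last hidden layer of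
width `d M = d_{L−1}`), at which the post-activation matrix
`Z(X) = (z_{L−1}(x₁), …, z_{L−1}(xₙ))` has rank `n`, then `θ*` is a global minimum of
the loss and the loss value is `0`. -/
theorem stmt9 (M n : ℕ) (d : ℕ → ℕ) (φ : ℝ → ℝ) (hφ : Continuous φ)
    (x : Fin n → Fin (d 0) → ℝ) (y : Fin n → Fin (d (M + 1)) → ℝ)
    (F : Params M d → ℝ)
    (hF : F = fun θ => ∑ i, ∑ j, (y i j - net M d (fun _ => φ) θ (x i) j) ^ 2)
    (θs : Params M d) (hmin : IsLocalMin F θs)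
    (hrank : (Matrix.of fun (j : Fin (d M)) (i : Fin n) =>
        mlpHidden d (fun _ => φ) (extW (M + 1) d θs.1) (extb M d θs.2) M (x i) j).rank = n) :
    F θs = 0 ∧ ∀ θ, F θs ≤ F θ := by
  have hFnonneg : ∀ θ, 0 ≤ F θ := by
    intro θ
    rw [hF]
    exact Finset.sum_nonneg fun i _ => Finset.sum_nonneg fun j _ => sq_nonneg _
  set Z : Fin (d M) → Fin n → ℝ :=
    fun j i => mlpHidden d (fun _ => φ) (extW (M + 1) d θs.1) (extb M d θs.2) M (x i) j with hZ
  -- surjectivity of Zᵀ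
  set A : Matrix (Fin (d M)) (Fin n) ℝ := Matrix.of Z with hA
  have hsurj : Function.Surjective A.transpose.mulVecLin := by
    rw [← LinearMap.range_eq_top]
    apply Submodule.eq_top_of_finrank_eq
    have h1 : Module.finrank ℝ ↥(LinearMap.range A.transpose.mulVecLin) = A.transpose.rank := rfl
    rw [h1, Matrix.rank_transpose A, hrank, Module.finrank_fin_fun]
  -- interpolating last layer
  obtain ⟨W0, hW0⟩ : ∃ W0 : Fin (d (M + 1)) → Fin (d M) → ℝ,
      ∀ j i, ∑ k, W0 j k * Z k i = y i j := by
    choose w hw using fun j => hsurj (fun i => y i j)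
    refine ⟨w, fun j i => ?_⟩
    have h := congrFun (hw j) i
    simp only [Matrix.mulVecLin_apply, Matrix.mulVec, dotProduct,
      Matrix.transpose_apply, hA, Matrix.of_apply] at h
    rw [← h]
    exact Finset.sum_congr rfl fun k _ => mul_comm _ _
  set L0 : Fin (M + 1) := ⟨M, Nat.lt_succ_self M⟩ with hL0
  -- path
  set g : ℝ → Params M d := fun t =>
    (Function.update θs.1 L0 (fun j k => θs.1 L0 j k + t * (W0 j k - θs.1 L0 j k)), θs.2)
    with hg
  have hg0 : g 0 = θs := by
    rw [hg]
    have : (fun j k => θs.1 L0 j k + (0:ℝ) * (W0 j k - θs.1 L0 j k)) = θs.1 L0 := by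
      funext j k; ring
    simp only [this, Function.update_eq_self]
  -- hidden layer unaffected
  have hhid : ∀ t i, mlpHidden d (fun _ => φ) (extW (M + 1) d (g t).1)
      (extb M d (g t).2) M (x i) = fun k => Z k i := by
    intro t i
    rw [hZ]
    apply mlpHidden_congr
    · intro l hl
      simp only [extW, hg]
      rw [dif_pos (hl.trans (Nat.lt_succ_self M)), dif_pos (hl.trans (Nat.lt_succ_self M))]
      exact Function.update_of_ne (Fin.ne_of_val_ne (Nat.ne_of_lt hl)) _ _
    · intro l hl
      rfl
  -- loss along path
  have hFg : ∀ t, F (g t) = (1 - t) ^ 2 * F θs := by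
    intro t
    rw [hF]
    simp only
    have hnet : ∀ i j, net M d (fun _ => φ) (g t) (x i) j
        = (1 - t) * net M d (fun _ => φ) θs (x i) j + t * y i j := by
      intro i j
      simp only [net, hhid t i]
      have hu : (g t).1 ⟨M, Nat.lt_succ_self M⟩ = fun j k => θs.1 L0 j k + t * (W0 j k - θs.1 L0 j k) :=
        Function.update_self L0 _ _
      rw [hu]
      have h2 : ∑ k, (θs.1 L0 j k + t * (W0 j k - θs.1 L0 j k)) * Z k i
          = ∑ k, (θs.1 L0 j k * Z k i + t * (W0 j k * Z k i - θs.1 L0 j k * Z k i)) :=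
        Finset.sum_congr rfl fun k _ => by ring
      rw [h2, Finset.sum_add_distrib, ← Finset.mul_sum, Finset.sum_sub_distrib, hW0 j i]
      have h3 : ∑ k, θs.1 ⟨M, Nat.lt_succ_self M⟩ j k *
          mlpHidden d (fun _ => φ) (extW (M + 1) d θs.1) (extb M d θs.2) M (x i) k
          = ∑ k, θs.1 L0 j k * Z k i := rfl
      rw [h3]
      ring
    rw [Finset.mul_sum]
    refine Finset.sum_congr rfl fun i _ => ?_
    rw [Finset.mul_sum]
    refine Finset.sum_congr rfl fun j _ => ?_
    rw [hnet i j]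
    ring
  -- contradiction if F θs > 0
  have hcont : ContinuousAt g 0 := by
    rw [hg]
    apply Continuous.continuousAt
    refine Continuous.prodMk ?_ continuous_const
    apply continuous_pi
    intro l
    by_cases h : l = L0
    · subst h
      simp only [Function.update_self]
      fun_prop
    · simp only [Function.update_of_ne h]
      exact continuous_const
  have key : ∀ᶠ t in nhds (0:ℝ), F θs ≤ (1 - t) ^ 2 * F θs := by
    have := hcont.eventually (by rw [hg0]; exact hmin)
    filter_upwards [this] with t ht
    rw [← hFg t]
    exact ht
  have hF0 : F θs = 0 := by
    by_contra hne
    have hpos : 0 < F θs := lt_of_le_of_ne (hFnonneg θs) (Ne.symm hne)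
    rw [Metric.eventually_nhds_iff] at key
    obtain ⟨ε, hε, hkey⟩ := key
    set t := min ε 1 / 2 with ht
    have ht0 : 0 < t := by positivity
    have hm : 0 < min ε 1 := lt_min hε one_pos
    have htε : dist t 0 < ε := by
      rw [Real.dist_eq, sub_zero, abs_of_pos ht0, ht]
      have := min_le_left ε 1
      linarith
    have ht1 : t < 1 := by
      rw [ht]
      have := min_le_right ε 1
      linarith
    have hk := hkey htε
    have hsq : (1 - t) ^ 2 < 1 := by nlinarith
    have : (1 - t) ^ 2 * F θs < 1 * F θs := mul_lt_mul_of_pos_right hsq hpos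
    linarith
  exact ⟨hF0, fun θ => hF0 ▸ hFnonneg θ⟩
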